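/- arXiv:2001.06710 — 3 statements merged into one kernel-verified Lean document; each statement's English description precedes it below -/
import Mathlib

section
/- Let ι be a finite type, let (E_i)_{i∈ι} and F be normed vector spaces over ℂ, let M be a continuous multilinear map from Π_{i∈ι} E_i to F, let N be a nonnegative integer, t₀ ∈ ℂ, and for each i ∈ ι let f_i : ℂ → E_i be N times continuously differentiable on a neighborhood of t₀. Then the function t ↦ M((f_i(t))_{i∈ι}) is N times differentiable at t₀ and its N-th iterated derivative at t₀ equals the sum, over all families (n_i)_{i∈ι} of nonnegative integers with Σ_{i∈ι} n_i = N, of (N!/Π_{i∈ι} n_i!) • M((iteratedDeriv^{n_i} f_i (t₀))_{i∈ι}). -/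
/-!
Differentiating `t ↦ M (f t)` once gives `∑ i, M (f with fᵢ replaced by fᵢ')`. Recording the
values `M (fun i => fᵢ^(kᵢ)(t₀))` as a function of the multi-index `k : ι → ℕ`, each derivative
therefore acts as the sum of the commuting shift operators `k ↦ k + eᵢ`, and the multinomial
theorem for commuting elements expands the `N`-th power of that sum.
-/

open Finset Function Filter Topology

section Shift

variable (R : Type*) {A X : Type*} [Semiring R] [AddMonoid A] [AddCommMonoid X] [Module R X]

def shiftEnd : Multiplicative A →* Module.End R (A → X) where
  toFun a := LinearMap.funLeft R X (· + a.toAdd)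
  map_one' := LinearMap.ext fun φ => funext fun k => congrArg φ (add_zero k)
  map_mul' _ _ := LinearMap.ext fun φ => funext fun _ => congrArg φ (add_assoc ..).symm

variable {R}

@[simp]
theorem shiftEnd_apply (a : Multiplicative A) (φ : A → X) (k : A) :
    shiftEnd R a φ k = φ (k + a.toAdd) := rfl

end Shift

theorem shiftEnd_sum_single_pow_apply_zero {R ι X : Type*} [Semiring R] [Fintype ι]
    [DecidableEq ι] [AddCommMonoid X] [Module R X] (φ : (ι → ℕ) → X) (N : ℕ) :
    ((∑ i, shiftEnd R (.ofAdd (Pi.single i 1))) ^ N) φ 0 =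
      ∑ k ∈ piAntidiag univ N, Nat.multinomial univ k • φ k := by
  rw [sum_pow_eq_sum_piAntidiag_of_commute _ _
    (Set.pairwise_of_forall _ _ fun _ _ => (Commute.all _ _).map (shiftEnd R))]
  simp only [LinearMap.coe_sum, Finset.sum_apply, Module.End.mul_apply, Module.End.natCast_apply]
  refine sum_congr rfl fun k _ => ?_
  simp_rw [← map_pow]
  rw [← map_noncommProd _ _ (Set.pairwise_of_forall _ _ fun _ _ => Commute.all _ _),
    noncommProd_eq_prod, Pi.smul_apply, shiftEnd_apply, zero_add, toAdd_prod]
  simp only [toAdd_pow, toAdd_ofAdd, ← Pi.single_smul', smul_eq_mul, mul_one, univ_sum_single]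

theorem filter_piFinset_range_sum_eq_piAntidiag {ι : Type*} [Fintype ι] [DecidableEq ι]
    (N : ℕ) :
    {k ∈ Fintype.piFinset fun _ : ι => range (N + 1) | ∑ i, k i = N} = piAntidiag univ N := by
  ext k
  simp only [mem_filter, Fintype.mem_piFinset, mem_range, mem_piAntidiag, mem_univ,
    implies_true, and_true, and_iff_right_iff_imp]
  rintro rfl i
  exact Nat.lt_succ_of_le (single_le_sum (fun j _ => Nat.zero_le (k j)) (mem_univ i))

section IteratedDeriv

variable {𝕜 ι : Type*} [NontriviallyNormedField 𝕜] [DecidableEq ι]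
  {E : ι → Type*} [∀ i, NormedAddCommGroup (E i)] [∀ i, NormedSpace 𝕜 (E i)]
  {F : Type*} [NormedAddCommGroup F] [NormedSpace 𝕜 F]

theorem iteratedDeriv_update_deriv (f : ∀ i, 𝕜 → E i) (i : ι) (k : ι → ℕ) (j : ι) :
    iteratedDeriv (k j) (update f i (deriv (f i)) j) =
      iteratedDeriv ((k + Pi.single i 1 : ι → ℕ) j) (f j) := by
  rcases eq_or_ne j i with rfl | hji
  · simp [iteratedDeriv_succ']
  · simp [hji]

variable [Fintype ι] (M : ContinuousMultilinearMap 𝕜 E F)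

theorem deriv_multilinear_comp {f : ∀ i, 𝕜 → E i} {t : 𝕜}
    (hf : ∀ i, DifferentiableAt 𝕜 (f i) t) :
    deriv (fun t => M (fun i => f i t)) t = ∑ i, M (fun j => update f i (deriv (f i)) j t) := by
  have hM : HasDerivAt (fun t => M (fun i => f i t))
      (M.linearDeriv (fun i => f i t) (fun i => deriv (f i) t)) t :=
    (M.hasFDerivAt _).comp_hasDerivAt t (hasDerivAt_pi.2 fun i => (hf i).hasDerivAt)
  rw [hM.deriv, ContinuousMultilinearMap.linearDeriv_apply]
  simp only [apply_update (fun j (g : 𝕜 → E j) => g t)]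

theorem iteratedDeriv_multilinear_comp_eq_shiftEnd_pow (n : ℕ) (t₀ : 𝕜) (f : ∀ i, 𝕜 → E i)
    (hf : ∀ i, ContDiffAt 𝕜 n (f i) t₀) :
    iteratedDeriv n (fun t => M (fun i => f i t)) t₀ =
      ((∑ i, shiftEnd 𝕜 (.ofAdd (Pi.single i 1))) ^ n)
        (fun k => M (fun i => iteratedDeriv (k i) (f i) t₀)) 0 := by
  induction n generalizing f with
  | zero => simp
  | succ n ih =>
    have hupdate : ∀ i j, ContDiffAt 𝕜 n (update f i (deriv (f i)) j) t₀ := by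
      intro i j
      rcases eq_or_ne j i with rfl | hji
      · simpa using (hf j).derivWithin le_rfl
      · simpa [hji] using (hf j).of_le (by norm_cast; omega)
    have hterm : ∀ i, ContDiffAt 𝕜 n (fun t => M (fun j => update f i (deriv (f i)) j t)) t₀ :=
      fun i => M.contDiff.contDiffAt.comp t₀ (contDiffAt_pi.2 (hupdate i))
    have hderiv : deriv (fun t => M (fun i => f i t)) =ᶠ[𝓝 t₀]
        fun t => ∑ i, M (fun j => update f i (deriv (f i)) j t) := by
      filter_upwards [eventually_all.2 fun i => (hf i).eventually (by simp)] with t ht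
      exact deriv_multilinear_comp M fun i => (ht i).differentiableAt (by simp)
    rw [iteratedDeriv_succ', hderiv.iteratedDeriv_eq, iteratedDeriv_fun_sum fun i _ => hterm i]
    rw [pow_succ, Module.End.mul_apply, LinearMap.coe_sum, Finset.sum_apply, map_sum,
      Finset.sum_apply]
    simp only [ih _ (hupdate _), iteratedDeriv_update_deriv]
    rfl

end IteratedDeriv

/-- generalized Leibniz rule for continuous multilinear maps.  If each
`f i : ℂ → E i` is `N` times continuously differentiable near `t₀` and `M` is a continuous
multilinear map, then `t ↦ M (fun i => f i t)` is `N` times differentiable at `t₀`, with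
`N`-th iterated derivative the multinomial sum of `M` applied to iterated derivatives. -/
theorem iteratedDeriv_continuousMultilinearMap_comp
    {ι : Type*} [Fintype ι] [DecidableEq ι]
    {E : ι → Type*} [∀ i, NormedAddCommGroup (E i)] [∀ i, NormedSpace ℂ (E i)]
    {F : Type*} [NormedAddCommGroup F] [NormedSpace ℂ F]
    (M : ContinuousMultilinearMap ℂ E F)
    (N : ℕ) (t₀ : ℂ) (f : ∀ i, ℂ → E i)
    (hf : ∀ i, ContDiffAt ℂ N (f i) t₀) :
    ContDiffAt ℂ N (fun t => M (fun i => f i t)) t₀ ∧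
      iteratedDeriv N (fun t => M (fun i => f i t)) t₀ =
        ∑ n ∈ (Fintype.piFinset fun _ : ι => Finset.range (N + 1)).filter
            (fun n => ∑ i : ι, n i = N),
          (N.factorial / ∏ i : ι, (n i).factorial) •
            M (fun i => iteratedDeriv (n i) (f i) t₀) := by
  refine ⟨M.contDiff.contDiffAt.comp t₀ (contDiffAt_pi.2 hf), ?_⟩
  rw [iteratedDeriv_multilinear_comp_eq_shiftEnd_pow M N t₀ f hf,
    shiftEnd_sum_single_pow_apply_zero, filter_piFinset_range_sum_eq_piAntidiag]
  refine sum_congr rfl fun n hn => ?_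
  rw [Nat.multinomial, (mem_piAntidiag.1 hn).1]
end

section
/- Let φ : ℂ → ℂ be analytic on a neighborhood of 0 with φ(0) = 0 and φ'(0) ≠ 0 (a simple zero at 0). Then there exist r > 0 and a function ζ : ℂ → ℂ analytic on the open ball of radius r about 0, with ζ(0) = 0 and ζ'(0) ≠ 0, such that φ(z) = (9/4) · ζ(z) · (ζ'(z))² for all |z| < r. -/
open scoped Topology
open Filter

/-!
Write `φ z = z g(z)` with `g 0 = φ' 0 ≠ 0` and take an analytic square root `s` of `g`, so that
`√φ = z^{1/2} s`. Looking for `ζ = z m²`, i.e. `ζ^{3/2} = z^{3/2} q` with `q = m³`, the defining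
relation `(ζ^{3/2})' = √φ` becomes the Euler-type equation `(3/2) q + z q' = s`. Since `z d/dz`
multiplies the `n`-th Taylor coefficient by `n`, it is solved by `q_n = s_n / (n + 3/2)`, a series
with the radius of convergence of `s`. As `q 0 = (2/3) s 0 ≠ 0`, `m` is an analytic cube root
of `q`.
-/

theorem AnalyticAt.dslope {𝕜 E : Type*} [NontriviallyNormedField 𝕜] [NormedAddCommGroup E]
    [NormedSpace 𝕜 E] {f : 𝕜 → E} {a : 𝕜} (hf : AnalyticAt 𝕜 f a) :
    AnalyticAt 𝕜 (dslope f a) a :=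
  let ⟨_, hp⟩ := hf
  hp.has_fpower_series_dslope_fslope.analyticAt

theorem AnalyticAt.exists_eventually_pow_eq {h : ℂ → ℂ} {x : ℂ} (hh : AnalyticAt ℂ h x)
    (hx : h x ≠ 0) {n : ℕ} (hn : n ≠ 0) :
    ∃ s : ℂ → ℂ, AnalyticAt ℂ s x ∧ s x ≠ 0 ∧ ∀ᶠ z in 𝓝 x, s z ^ n = h z := by
  obtain ⟨u, hu⟩ := IsAlgClosed.exists_pow_nat_eq (h x) (Nat.pos_of_ne_zero hn)
  have hu0 : u ≠ 0 := by rintro rfl; exact hx (by rw [← hu, zero_pow hn])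
  refine ⟨fun z => u * Complex.exp (Complex.log (h z / h x) / n), ?_, by simpa [hx], ?_⟩
  · have hslit : h x / h x ∈ Complex.slitPlane := by simp [hx]
    exact analyticAt_const.mul (((hh.div analyticAt_const hx).clog hslit).div_const).cexp
  · filter_upwards [hh.continuousAt.eventually_ne hx] with z hz
    rw [mul_pow, hu, ← Complex.exp_nat_mul, mul_div_cancel₀ _ (Nat.cast_ne_zero.2 hn),
      Complex.exp_log (div_ne_zero hz hx), mul_div_cancel₀ _ hx]

theorem HasFPowerSeriesOnBall.hasSum_smul_deriv {𝕜 F : Type*} [NontriviallyNormedField 𝕜]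
    [NormedAddCommGroup F] [NormedSpace 𝕜 F] [CompleteSpace F] {f : 𝕜 → F}
    {p : FormalMultilinearSeries 𝕜 𝕜 F} {r : ENNReal} (hf : HasFPowerSeriesOnBall f p 0 r)
    {z : 𝕜} (hz : z ∈ Metric.eball 0 r) :
    HasSum (fun n : ℕ => n • p n (fun _ => z)) (z • deriv f z) := by
  have h := (hf.fderiv.hasSum hz).mapL (ContinuousLinearMap.apply 𝕜 F z)
  simp only [zero_add, ContinuousLinearMap.apply_apply, fderiv_eq_smul_deriv,
    FormalMultilinearSeries.derivSeries_apply_diag] at h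
  rw [← hasSum_nat_add_iff' 1]
  simpa using h

theorem Complex.re_le_norm_natCast_add (c : ℂ) (n : ℕ) : c.re ≤ ‖(n : ℂ) + c‖ :=
  calc c.re ≤ ((n : ℂ) + c).re := by simp
    _ ≤ ‖(n : ℂ) + c‖ := Complex.re_le_norm _

open FormalMultilinearSeries in
theorem AnalyticAt.exists_const_mul_add_id_mul_deriv_eq {s : ℂ → ℂ} (hs : AnalyticAt ℂ s 0)
    {c : ℂ} (hc : 0 < c.re) :
    ∃ q : ℂ → ℂ, AnalyticAt ℂ q 0 ∧ ∀ᶠ z in 𝓝 0, c * q z + z * deriv q z = s z := by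
  obtain ⟨σ, r, hσ⟩ := hs
  have hnc (n : ℕ) : (n : ℂ) + c ≠ 0 :=
    norm_pos_iff.1 (hc.trans_le (Complex.re_le_norm_natCast_add c n))
  set τ := ofScalars ℂ fun n => σ.coeff n / (n + c)
  have hrad : σ.radius ≤ τ.radius := by
    refine radius_le_smul.trans (radius_le_of_le (q := (c.re⁻¹ : ℂ) • σ) fun n => ?_)
    rw [ofScalars_norm, FormalMultilinearSeries.smul_apply, norm_smul, σ.norm_apply_eq_norm_coef,
      norm_div, div_eq_inv_mul, norm_inv, Complex.norm_real, Real.norm_of_nonneg hc.le]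
    gcongr
    exact Complex.re_le_norm_natCast_add c n
  have hτ : HasFPowerSeriesOnBall τ.sum τ 0 r :=
    (τ.hasFPowerSeriesOnBall (hσ.r_pos.trans_le (hσ.r_le.trans hrad))).mono hσ.r_pos
      (hσ.r_le.trans hrad)
  refine ⟨τ.sum, hτ.analyticAt, eventually_of_mem (Metric.eball_mem_nhds 0 hσ.r_pos) ?_⟩
  intro z hz
  have hsum := ((hτ.hasSum hz).mul_left c).add (hτ.hasSum_smul_deriv hz)
  simp only [zero_add, smul_eq_mul] at hsum
  have hterm (n : ℕ) : c * τ n (fun _ => z) + n • τ n (fun _ => z) = σ n (fun _ => z) := by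
    rw [σ.apply_eq_pow_smul_coeff, ofScalars_apply_eq, smul_eq_mul, smul_eq_mul, nsmul_eq_mul]
    field_simp [hnc n]
    ring
  simp only [hterm] at hsum
  simpa using hsum.unique (hσ.hasSum hz)

theorem nine_div_four_mul_id_mul_sq_mul_deriv_sq {m : ℂ → ℂ} {z : ℂ}
    (hm : DifferentiableAt ℂ m z) :
    9 / 4 * (z * m z ^ 2) * deriv (fun w => w * m w ^ 2) z ^ 2 =
      z * (3 / 2 * m z ^ 3 + z * deriv (fun w => m w ^ 3) z) ^ 2 := by
  rw [deriv_fun_mul differentiableAt_fun_id (hm.fun_pow 2), deriv_fun_pow hm, deriv_fun_pow hm]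
  simp only [deriv_id'', Nat.cast_ofNat]
  ring

/-- distinguished local parameter at a simple zero of a quadratic
differential.  If `φ` is analytic near `0` with a simple zero at `0`, then there is an
analytic local coordinate `ζ` with `ζ 0 = 0`, `ζ' 0 ≠ 0`, such that
`φ z = (9/4) ζ(z) (ζ'(z))²` near `0`. -/
theorem exists_distinguished_local_parameter
    (φ : ℂ → ℂ) (hφ : AnalyticAt ℂ φ 0) (h0 : φ 0 = 0) (h1 : deriv φ 0 ≠ 0) :
    ∃ r : ℝ, 0 < r ∧ ∃ ζ : ℂ → ℂ,
      AnalyticOnNhd ℂ ζ (Metric.ball (0 : ℂ) r) ∧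
      ζ 0 = 0 ∧ deriv ζ 0 ≠ 0 ∧
      ∀ z ∈ Metric.ball (0 : ℂ) r, φ z = (9 / 4 : ℂ) * ζ z * (deriv ζ z) ^ 2 := by
  obtain ⟨s, hs, hs0, hsg⟩ :=
    hφ.dslope.exists_eventually_pow_eq (by rwa [dslope_same]) two_ne_zero
  obtain ⟨q, hq, hqs⟩ := hs.exists_const_mul_add_id_mul_deriv_eq (c := 3 / 2) (by norm_num)
  have hq0 : q 0 ≠ 0 := by
    have h := hqs.self_of_nhds
    rw [zero_mul, add_zero] at h
    exact right_ne_zero_of_mul (h ▸ hs0)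
  obtain ⟨m, hm, hm0, hmq⟩ := hq.exists_eventually_pow_eq hq0 three_ne_zero
  set ζ : ℂ → ℂ := fun w => w * m w ^ 2
  have hζ : ∀ᶠ z in 𝓝 0, AnalyticAt ℂ ζ z ∧ φ z = 9 / 4 * ζ z * deriv ζ z ^ 2 := by
    filter_upwards [hm.eventually_analyticAt, hsg, hqs, hmq.eventually_nhds]
      with z hmz hsz hqz hmqz
    refine ⟨analyticAt_id.mul (hmz.pow 2), ?_⟩
    rw [nine_div_four_mul_id_mul_sq_mul_deriv_sq hmz.differentiableAt,
      EventuallyEq.deriv_eq hmqz, hmqz.self_of_nhds, hqz, hsz, ← sub_smul_dslope_of_zero h0 z,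
      sub_zero, smul_eq_mul]
  obtain ⟨r, hr, hball⟩ := Metric.eventually_nhds_iff_ball.1 hζ
  refine ⟨r, hr, ζ, fun z hz => (hball z hz).1, by simp [ζ], ?_, fun z hz => (hball z hz).2⟩
  rw [deriv_fun_mul differentiableAt_fun_id (hm.differentiableAt.fun_pow 2)]
  simpa using hm0
end

section
/- For complex coefficients a = (a₁,…,a₆) and b = (b₁,…,b₆), define u, v : ℂ∖{0} → ℂ by u(z) = a₁ log|z| + a₂/z + a₃/conj(z) + a₄ + a₅ z + a₆ conj(z) and v(z) = b₁ log|z| + b₂/z + b₃/conj(z) + b₄ + b₅ z + b₆ conj(z). Let ∂_r u(r e^{iθ}) denote the derivative of r ↦ u(r e^{iθ}). Then the limit as ε → 0⁺ of ∫₀^{2π} [ u(ε e^{iθ}) · ∂_r v(ε e^{iθ}) − v(ε e^{iθ}) · ∂_r u(ε e^{iθ}) ] ε dθ exists and equals 2π(a₄ b₁ − a₁ b₄) + 4π(a₂ b₅ − a₅ b₂) + 4π(a₃ b₆ − a₆ b₃). -/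
/-!
On the circle `|z| = ε` put `w = e^{iθ}`. Since `w̄ = w⁻¹`, the model function and its radial
derivative are Laurent polynomials in `w` whose coefficients depend on `ε` and `log ε`, so the
flux `ε (u ∂ᵣv - v ∂ᵣu)` is a Laurent polynomial of degree at most two in `w`. In its constant term
the `log ε` and all powers of `ε` cancel, and integrating over a period kills every other
mode. Hence the boundary integral does not depend on `ε > 0` at all.
-/

open scoped Real ComplexConjugate

/-- The model singular function `a₁ log|z| + a₂/z + a₃/z̄ + a₄ + a₅ z + a₆ z̄`
(coefficients indexed by `Fin 6`). -/
noncomputable def modelAsympt (a : Fin 6 → ℂ) (z : ℂ) : ℂ :=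
  a 0 * (Real.log ‖z‖ : ℂ) + a 1 / z + a 2 / conj z + a 3 + a 4 * z + a 5 * conj z

/-- The radial derivative at radius `ε` in direction `θ` of a function `f : ℂ → ℂ`:
the derivative of `r ↦ f (r e^{iθ})` at `r = ε`. -/
noncomputable def radialDeriv (f : ℂ → ℂ) (θ ε : ℝ) : ℂ :=
  deriv (fun r : ℝ => f ((r : ℂ) * Complex.exp (Complex.I * θ))) ε

open Complex

lemma integral_exp_I_mul_zpow {n : ℤ} (hn : n ≠ 0) :
    ∫ θ in (0 : ℝ)..(2 * π), exp (I * θ) ^ n = 0 := by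
  have hc : (n : ℂ) * I ≠ 0 := mul_ne_zero (Int.cast_ne_zero.2 hn) I_ne_zero
  simp_rw [← exp_int_mul, ← mul_assoc]
  rw [integral_exp_mul_complex hc]
  have hper : (n : ℂ) * I * ((2 * π : ℝ) : ℂ) = n * (2 * π * I) := by push_cast; ring
  rw [hper, exp_int_mul_two_pi_mul_I]
  simp

lemma integral_laurent_exp_I_mul (c₀ c₁ d₁ c₂ d₂ : ℂ) :
    ∫ θ in (0 : ℝ)..(2 * π), (c₀ + c₁ * exp (I * θ) + d₁ * exp (I * θ) ^ (-1 : ℤ)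
      + c₂ * exp (I * θ) ^ (2 : ℤ) + d₂ * exp (I * θ) ^ (-2 : ℤ)) = 2 * π * c₀ := by
  have hint (c : ℂ) (n : ℤ) :
      IntervalIntegrable (fun θ : ℝ => c * exp (I * θ) ^ n) MeasureTheory.volume 0 (2 * π) := by
    refine (continuous_const.mul ?_).intervalIntegrable _ _
    exact (by fun_prop : Continuous fun θ : ℝ => exp (I * θ)).zpow₀ n fun _ => .inl (exp_ne_zero _)
  have hmono (c : ℂ) {n : ℤ} (hn : n ≠ 0) :
      ∫ θ in (0 : ℝ)..(2 * π), c * exp (I * θ) ^ n = 0 := by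
    rw [intervalIntegral.integral_const_mul, integral_exp_I_mul_zpow hn, mul_zero]
  have h1 := hint c₁ 1
  have hmono1 := hmono c₁ one_ne_zero
  simp only [zpow_one] at h1 hmono1
  rw [intervalIntegral.integral_add (((intervalIntegrable_const.add h1).add (hint _ _)).add
      (hint _ _)) (hint _ _), intervalIntegral.integral_add ((intervalIntegrable_const.add h1).add
      (hint _ _)) (hint _ _), intervalIntegral.integral_add (intervalIntegrable_const.add h1)
      (hint _ _), intervalIntegral.integral_add intervalIntegrable_const h1]
  simp only [hmono _ (by norm_num : (-1 : ℤ) ≠ 0), hmono _ (by norm_num : (2 : ℤ) ≠ 0),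
    hmono _ (by norm_num : (-2 : ℤ) ≠ 0), hmono1, intervalIntegral.integral_const, real_smul]
  push_cast
  ring

lemma modelAsympt_ofReal_mul (a : Fin 6 → ℂ) {w : ℂ} (hw : ‖w‖ = 1) (r : ℝ) :
    modelAsympt a (r * w) = a 0 * (Real.log r : ℂ) + (a 1 * w⁻¹ + a 2 * w) * (r : ℂ)⁻¹ + a 3
      + (a 4 * w + a 5 * w⁻¹) * r := by
  rw [modelAsympt, norm_mul, hw, mul_one, norm_real, Real.norm_eq_abs, Real.log_abs, map_mul,
    conj_ofReal, ← inv_eq_conj hw]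
  simp only [div_eq_mul_inv, mul_inv, inv_inv]
  ring

lemma hasDerivAt_modelAsympt_ofReal_mul (a : Fin 6 → ℂ) {w : ℂ} (hw : ‖w‖ = 1) {r : ℝ}
    (hr : r ≠ 0) :
    HasDerivAt (fun s : ℝ => modelAsympt a (s * w))
      (a 0 * (r : ℂ)⁻¹ - (a 1 * w⁻¹ + a 2 * w) * ((r : ℂ) ^ 2)⁻¹ + (a 4 * w + a 5 * w⁻¹)) r := by
  simp_rw [modelAsympt_ofReal_mul a hw]
  have hlog : HasDerivAt (fun s : ℝ => (Real.log s : ℂ)) (r : ℂ)⁻¹ r := by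
    simpa using (Real.hasDerivAt_log hr).ofReal_comp
  have hinv : HasDerivAt (fun s : ℝ => (s : ℂ)⁻¹) (-((r : ℂ) ^ 2)⁻¹) r :=
    (hasDerivAt_inv (ofReal_ne_zero.2 hr)).comp_ofReal
  have hid : HasDerivAt (fun s : ℝ => (s : ℂ)) 1 r := (hasDerivAt_id (r : ℂ)).comp_ofReal
  refine ((((hlog.const_mul (a 0)).add (hinv.const_mul (a 1 * w⁻¹ + a 2 * w))).add_const
    (a 3)).add (hid.const_mul (a 4 * w + a 5 * w⁻¹))).congr_deriv ?_
  ring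

lemma radialDeriv_modelAsympt (a : Fin 6 → ℂ) (θ : ℝ) {ε : ℝ} (hε : ε ≠ 0) :
    radialDeriv (modelAsympt a) θ ε = a 0 * (ε : ℂ)⁻¹
      - (a 1 * (exp (I * θ))⁻¹ + a 2 * exp (I * θ)) * ((ε : ℂ) ^ 2)⁻¹
      + (a 4 * exp (I * θ) + a 5 * (exp (I * θ))⁻¹) :=
  (hasDerivAt_modelAsympt_ofReal_mul a (norm_exp_I_mul_ofReal θ) hε).deriv

noncomputable def greenFlux (f g : ℂ → ℂ) (θ ε : ℝ) : ℂ :=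
  (f (ε * exp (I * θ)) * radialDeriv g θ ε - g (ε * exp (I * θ)) * radialDeriv f θ ε) * ε

lemma exists_greenFlux_modelAsympt_eq (a b : Fin 6 → ℂ) {ε : ℝ} (hε : ε ≠ 0) :
    ∃ c₁ d₁ : ℂ, ∀ θ : ℝ, greenFlux (modelAsympt a) (modelAsympt b) θ ε =
      (a 3 * b 0 - a 0 * b 3) + 2 * (a 1 * b 4 - a 4 * b 1) + 2 * (a 2 * b 5 - a 5 * b 2)
        + c₁ * exp (I * θ) + d₁ * exp (I * θ) ^ (-1 : ℤ)
        + 2 * (a 2 * b 4 - a 4 * b 2) * exp (I * θ) ^ (2 : ℤ)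
        + 2 * (a 1 * b 5 - a 5 * b 1) * exp (I * θ) ^ (-2 : ℤ) := by
  set L : ℂ := ((Real.log ε : ℝ) : ℂ)
  set A := a 0 * L + a 3
  set B := b 0 * L + b 3
  refine ⟨((B + b 0) * a 2 - (A + a 0) * b 2) / ε + ((A - a 0) * b 4 - (B - b 0) * a 4) * ε,
    ((B + b 0) * a 1 - (A + a 0) * b 1) / ε + ((A - a 0) * b 5 - (B - b 0) * a 5) * ε,
    fun θ => ?_⟩
  have hw : exp (I * θ) ≠ 0 := exp_ne_zero _
  have hε' : (ε : ℂ) ≠ 0 := ofReal_ne_zero.2 hε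
  rw [greenFlux, modelAsympt_ofReal_mul a (norm_exp_I_mul_ofReal θ),
    modelAsympt_ofReal_mul b (norm_exp_I_mul_ofReal θ), radialDeriv_modelAsympt a θ hε,
    radialDeriv_modelAsympt b θ hε]
  simp only [zpow_neg, zpow_ofNat, A, B]
  field_simp
  ring

/-- Green-identity boundary computation at a conical point.  With
`u = modelAsympt a` and `v = modelAsympt b`, the limit as `ε → 0⁺` of
`∫₀^{2π} (u ∂_r v − v ∂_r u)(ε e^{iθ}) ε dθ` exists and equals
`2π(a₄b₁ − a₁b₄) + 4π(a₂b₅ − a₅b₂) + 4π(a₃b₆ − a₆b₃)`. -/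
theorem green_identity_conical_point (a b : Fin 6 → ℂ) :
    Filter.Tendsto
      (fun ε : ℝ => ∫ θ in (0:ℝ)..(2 * π),
        (modelAsympt a ((ε : ℂ) * Complex.exp (Complex.I * θ)) * radialDeriv (modelAsympt b) θ ε
          - modelAsympt b ((ε : ℂ) * Complex.exp (Complex.I * θ))
              * radialDeriv (modelAsympt a) θ ε) * (ε : ℂ))
      (nhdsWithin 0 (Set.Ioi 0))
      (nhds (2 * (π : ℂ) * (a 3 * b 0 - a 0 * b 3)
        + 4 * (π : ℂ) * (a 1 * b 4 - a 4 * b 1)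
        + 4 * (π : ℂ) * (a 2 * b 5 - a 5 * b 2))) := by
  refine tendsto_const_nhds.congr' ?_
  filter_upwards [self_mem_nhdsWithin] with ε (hε : 0 < ε)
  obtain ⟨c₁, d₁, hflux⟩ := exists_greenFlux_modelAsympt_eq a b hε.ne'
  change _ = ∫ θ in (0 : ℝ)..(2 * π), greenFlux (modelAsympt a) (modelAsympt b) θ ε
  simp_rw [hflux, integral_laurent_exp_I_mul]
  ring
end
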